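/- arXiv:1411.2747 — 7 statements merged into one kernel-verified Lean document; each statement's English description precedes it below -/
import Mathlib

section
/- For a proper subdomain G of ℝⁿ and all x, y ∈ G, j*_G(x,y) ≤ s_G(x,y) ≤ (e^{j_G(x,y)} − 1)/2. -/
open Metric Set

noncomputable def dd {n : ℕ} (G : Set (EuclideanSpace ℝ (Fin n))) (x : EuclideanSpace ℝ (Fin n)) : ℝ :=
  Metric.infDist x (frontier G)

noncomputable def jMet {n : ℕ} (G : Set (EuclideanSpace ℝ (Fin n))) (x y : EuclideanSpace ℝ (Fin n)) : ℝ :=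
  Real.log (1 + dist x y / min (dd G x) (dd G y))

noncomputable def jStar {n : ℕ} (G : Set (EuclideanSpace ℝ (Fin n))) (x y : EuclideanSpace ℝ (Fin n)) : ℝ :=
  Real.tanh (jMet G x y / 2)

noncomputable def sMet {n : ℕ} (G : Set (EuclideanSpace ℝ (Fin n))) (x y : EuclideanSpace ℝ (Fin n)) : ℝ :=
  ⨆ z : frontier G, dist x y / (dist x (z : EuclideanSpace ℝ (Fin n)) + dist (z : EuclideanSpace ℝ (Fin n)) y)

noncomputable def pMet {n : ℕ} (G : Set (EuclideanSpace ℝ (Fin n))) (x y : EuclideanSpace ℝ (Fin n)) : ℝ :=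
  dist x y / Real.sqrt (dist x y ^ 2 + 4 * dd G x * dd G y)

noncomputable def vMet {n : ℕ} (G : Set (EuclideanSpace ℝ (Fin n))) (x y : EuclideanSpace ℝ (Fin n)) : ℝ :=
  ⨆ z : frontier G, EuclideanGeometry.angle x (z : EuclideanSpace ℝ (Fin n)) y

/-!
Write `t = |x - y|` and `D = min (d x) (d y)`. Then `exp j = 1 + t / D`, so `j* = t / (2D + t)`
and `(exp j - 1) / 2 = t / (2D)`. Every boundary point `z` has `|x - z| + |z - y| ≥ 2D`, which
gives the upper bound. Conversely `|x - z| + |z - y| ≤ 2|x - z| + t`, so any upper bound `s` of the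
ratios satisfies `2|x - z| + t ≥ t / s` for every boundary point `z`; taking the infimum over `z`
gives `t / (2 d x + t) ≤ s`, and symmetrically for `y`.
-/

lemma Real.tanh_half_log {u : ℝ} (hu : 0 < u) :
    Real.tanh (Real.log u / 2) = (u - 1) / (u + 1) := by
  have hsq : Real.exp (Real.log u / 2) ^ 2 = u := by
    rw [← Real.exp_nat_mul, Nat.cast_ofNat, mul_div_cancel₀ _ two_ne_zero, Real.exp_log hu]
  have hpos : 0 < Real.exp (Real.log u / 2) := Real.exp_pos _
  rw [Real.tanh_eq_sinh_div_cosh, Real.sinh_eq, Real.cosh_eq, Real.exp_neg]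
  generalize Real.exp (Real.log u / 2) = v at hsq hpos ⊢
  subst hsq
  field_simp

section TriangleRatio

variable {α : Type*} [PseudoMetricSpace α] {S : Set α} {x y : α}

lemma dist_div_dist_add_dist_le_one (x y z : α) : dist x y / (dist x z + dist z y) ≤ 1 :=
  div_le_one_of_le₀ (dist_triangle x z y) (by positivity)

lemma dist_div_dist_add_dist_le_of_mem {z : α} (hz : z ∈ S)
    (hD : 0 < min (infDist x S) (infDist y S)) :
    dist x y / (dist x z + dist z y) ≤ dist x y / (2 * min (infDist x S) (infDist y S)) := by
  have hxz : min (infDist x S) (infDist y S) ≤ dist x z :=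
    (min_le_left _ _).trans (infDist_le_dist_of_mem hz)
  have hzy : min (infDist x S) (infDist y S) ≤ dist z y :=
    (min_le_right _ _).trans (dist_comm y z ▸ infDist_le_dist_of_mem hz)
  gcongr
  linarith

lemma dist_div_two_infDist_add_dist_le (hS : S.Nonempty) {s : ℝ}
    (hs : ∀ z ∈ S, dist x y / (dist x z + dist z y) ≤ s) :
    dist x y / (2 * infDist x S + dist x y) ≤ s := by
  obtain ⟨z₀, hz₀⟩ := hS
  rcases (dist_nonneg (x := x) (y := y)).eq_or_lt with ht | ht
  · rw [← ht, zero_div]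
    exact (div_nonneg dist_nonneg (by positivity)).trans (hs z₀ hz₀)
  have hs0 : 0 < s := (div_pos ht (ht.trans_le (dist_triangle x z₀ y))).trans_le (hs z₀ hz₀)
  have hinf : (dist x y - s * dist x y) / (2 * s) ≤ infDist x S := by
    refine (le_infDist ⟨z₀, hz₀⟩).2 fun z hz => ?_
    have hratio := hs z hz
    rw [div_le_iff₀ (ht.trans_le (dist_triangle x z y))] at hratio
    have hzy : dist z y ≤ dist x z + dist x y :=
      (dist_triangle z x y).trans_eq (by rw [dist_comm])
    rw [div_le_iff₀ (by linarith)]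
    nlinarith [mul_le_mul_of_nonneg_left hzy hs0.le]
  rw [div_le_iff₀ (by linarith)] at hinf
  rw [div_le_iff₀ (by linarith [infDist_nonneg (x := x) (s := S)])]
  linarith

lemma dist_div_two_min_infDist_add_dist_le (hS : S.Nonempty) {s : ℝ}
    (hs : ∀ z ∈ S, dist x y / (dist x z + dist z y) ≤ s) :
    dist x y / (2 * min (infDist x S) (infDist y S) + dist x y) ≤ s := by
  rcases min_choice (infDist x S) (infDist y S) with h | h <;> rw [h]
  · exact dist_div_two_infDist_add_dist_le hS hs
  · rw [dist_comm x y]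
    exact dist_div_two_infDist_add_dist_le hS fun z hz => by
      simpa only [dist_comm, add_comm] using hs z hz

end TriangleRatio

theorem stmt1_general {n : ℕ} (G : Set (EuclideanSpace ℝ (Fin n)))
    (hGo : IsOpen G) (hGne : G ≠ univ)
    (x y : EuclideanSpace ℝ (Fin n)) (hx : x ∈ G) (hy : y ∈ G) :
    jStar G x y ≤ sMet G x y ∧ sMet G x y ≤ (Real.exp (jMet G x y) - 1) / 2 := by
  have hS : (frontier G).Nonempty := nonempty_frontier_iff.2 ⟨⟨x, hx⟩, hGne⟩
  have hd : ∀ w ∈ G, 0 < dd G w := fun w hw =>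
    (isClosed_frontier.notMem_iff_infDist_pos hS).1 fun hw' =>
      hGo.inter_frontier_eq.subset ⟨hw, hw'⟩
  have hD : 0 < min (dd G x) (dd G y) := lt_min (hd x hx) (hd y hy)
  have hexp : Real.exp (jMet G x y) = 1 + dist x y / min (dd G x) (dd G y) :=
    Real.exp_log (by positivity)
  have hratio : ∀ z ∈ frontier G, dist x y / (dist x z + dist z y) ≤ sMet G x y := fun z hz =>
    le_ciSup
      (f := fun z : frontier G => dist x y / (dist x z + dist (z : EuclideanSpace ℝ (Fin n)) y))
      ⟨1, forall_mem_range.2 fun z => dist_div_dist_add_dist_le_one x y z⟩ ⟨z, hz⟩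
  constructor
  · have hj : jStar G x y = dist x y / (2 * min (dd G x) (dd G y) + dist x y) := by
      rw [jStar, jMet, Real.tanh_half_log (by positivity)]
      field_simp
      ring
    rw [hj]
    exact dist_div_two_min_infDist_add_dist_le hS hratio
  · have : Nonempty (frontier G) := hS.to_subtype
    rw [hexp, add_sub_cancel_left, div_div, mul_comm]
    exact ciSup_le fun z => dist_div_dist_add_dist_le_of_mem z.2 hD

theorem stmt1 {n : ℕ} (G : Set (EuclideanSpace ℝ (Fin n)))
    (hGo : IsOpen G) (hGc : IsConnected G) (hGne : G ≠ univ)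
    (x y : EuclideanSpace ℝ (Fin n)) (hx : x ∈ G) (hy : y ∈ G) :
    jStar G x y ≤ sMet G x y ∧ sMet G x y ≤ (Real.exp (jMet G x y) - 1) / 2 :=
  stmt1_general G hGo hGne x y hx hy
end

section
/- For a proper subdomain G of ℝⁿ and all x, y ∈ G, s_G(x,y) ≤ 2·j*_G(x,y). -/
open Metric Set

lemma tanh_log_half (u : ℝ) (hu : 0 < u) :
    Real.tanh (Real.log u / 2) = (u - 1) / (u + 1) := by
  set a := Real.exp (Real.log u / 2) with ha
  have ha2 : a ^ 2 = u := by
    rw [ha, sq, ← Real.exp_add]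
    rw [show Real.log u / 2 + Real.log u / 2 = Real.log u by ring, Real.exp_log hu]
  have hapos : 0 < a := Real.exp_pos _
  rw [Real.tanh_eq_sinh_div_cosh, Real.sinh_eq, Real.cosh_eq, Real.exp_neg, ← ha, ← ha2]
  field_simp

theorem stmt2 {n : ℕ} (G : Set (EuclideanSpace ℝ (Fin n)))
    (hGo : IsOpen G) (hGc : IsConnected G) (hGne : G ≠ univ)
    (x y : EuclideanSpace ℝ (Fin n)) (hx : x ∈ G) (hy : y ∈ G) :
    sMet G x y ≤ 2 * jStar G x y := by
  have hfne : (frontier G).Nonempty := by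
    by_contra h
    rw [Set.not_nonempty_iff_eq_empty] at h
    have hcl : IsClopen G := isClopen_iff_frontier_eq_empty.mpr h
    rcases (isClopen_iff.mp hcl) with h1 | h1
    · exact absurd h1 (Nonempty.ne_empty hGc.nonempty)
    · exact hGne h1
  have hposd : ∀ w ∈ G, 0 < dd G w := by
    intro w hw
    have hwnot : w ∉ frontier G := by
      intro hwf
      rw [frontier, hGo.interior_eq] at hwf; exact hwf.2 hw
    exact (isClosed_frontier.notMem_iff_infDist_pos hfne).mp hwnot
  set t := dist x y with ht
  set m := min (dd G x) (dd G y) with hm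
  have hmpos : 0 < m := lt_min (hposd x hx) (hposd y hy)
  have htnn : 0 ≤ t := dist_nonneg
  have hu : (0:ℝ) < 1 + t / m := by positivity
  have hj : 2 * jStar G x y = 2 * t / (t + 2 * m) := by
    rw [jStar, jMet, tanh_log_half _ hu]
    rw [show (1 + t / m - 1) = t / m by ring]
    have hd : m * (1 + t / m + 1) = t + 2 * m := by
      field_simp; ring
    rw [div_div, hd, mul_div_assoc]
  rw [hj, sMet]
  haveI : Nonempty (frontier G) := hfne.to_subtype
  apply ciSup_le
  intro z
  have hz := z.2
  have hxz : m ≤ dist x (z : EuclideanSpace ℝ (Fin n)) :=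
    le_trans (min_le_left _ _) (Metric.infDist_le_dist_of_mem hz)
  have hzy : m ≤ dist (z : EuclideanSpace ℝ (Fin n)) y := by
    refine le_trans (min_le_right _ _) ?_
    rw [dist_comm]
    exact Metric.infDist_le_dist_of_mem hz
  set D := dist x (z : EuclideanSpace ℝ (Fin n)) + dist (z : EuclideanSpace ℝ (Fin n)) y with hD
  have hDt : t ≤ D := dist_triangle x _ y
  have hDm : 2 * m ≤ D := by linarith
  have hDpos : 0 < D := by linarith
  rw [div_le_div_iff₀ hDpos (by linarith)]
  nlinarith
end

section
/- For a proper subdomain G of ℝⁿ and all x, y ∈ G, j*_G(x,y) ≤ p_G(x,y) ≤ w/√(w²+1) ≤ √2·j*_G(x,y), where w = (e^{j_G(x,y)} − 1)/2. -/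
open Metric Set

/-- tanh (log (1+r) / 2) = r / (r + 2) for nonneg r. -/
lemma tanh_half_log_aux (r : ℝ) (hr : 0 ≤ r) :
    Real.tanh (Real.log (1 + r) / 2) = r / (r + 2) := by
  have h1 : (0 : ℝ) < 1 + r := by linarith
  set u := Real.log (1 + r) / 2 with hu
  have ha : 0 < Real.exp u := Real.exp_pos u
  have ha2 : Real.exp u ^ 2 = 1 + r := by
    rw [← Real.exp_nat_mul]
    have : (2 : ℕ) * u = Real.log (1 + r) := by rw [hu]; push_cast; ring
    rw [this, Real.exp_log h1]
  rw [Real.tanh_eq_sinh_div_cosh, Real.sinh_eq, Real.cosh_eq, Real.exp_neg]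
  have hne : Real.exp u ≠ 0 := ne_of_gt ha
  have hden : Real.exp u + (Real.exp u)⁻¹ ≠ 0 := by positivity
  have hr2 : r + 2 ≠ 0 := by positivity
  field_simp
  nlinarith [ha2]

set_option maxHeartbeats 1000000 in
theorem stmt3 {n : ℕ} (G : Set (EuclideanSpace ℝ (Fin n)))
    (hGo : IsOpen G) (hGc : IsConnected G) (hGne : G ≠ univ)
    (x y : EuclideanSpace ℝ (Fin n)) (hx : x ∈ G) (hy : y ∈ G) :
    jStar G x y ≤ pMet G x y ∧
    pMet G x y ≤ (Real.exp (jMet G x y) - 1) / 2 /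
      Real.sqrt (((Real.exp (jMet G x y) - 1) / 2) ^ 2 + 1) ∧
    (Real.exp (jMet G x y) - 1) / 2 /
      Real.sqrt (((Real.exp (jMet G x y) - 1) / 2) ^ 2 + 1) ≤ Real.sqrt 2 * jStar G x y := by
  -- boundary is nonempty
  have hfr : (frontier G).Nonempty := by
    rw [nonempty_iff_ne_empty]
    intro h
    rcases frontier_eq_empty_iff.mp h with h1 | h1
    · exact absurd h1 (Nonempty.ne_empty ⟨x, hx⟩)
    · exact hGne h1
  have hfrc : IsClosed (frontier G) := isClosed_frontier
  -- distances to the boundary are positive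
  have hpos : ∀ z ∈ G, 0 < dd G z := by
    intro z hz
    have hznf : z ∉ frontier G := fun hzf =>
      hzf.2 (mem_interior_iff_mem_nhds.mpr (hGo.mem_nhds hz))
    exact (hfrc.notMem_iff_infDist_pos hfr).mp hznf
  have hdx : 0 < dd G x := hpos x hx
  have hdy : 0 < dd G y := hpos y hy
  set t : ℝ := dist x y with ht
  set m : ℝ := min (dd G x) (dd G y) with hm
  have hmpos : 0 < m := lt_min hdx hdy
  have htnn : 0 ≤ t := dist_nonneg
  -- Lipschitz property of the distance: the max distance is at most m + t
  have hlip : dd G x * dd G y ≤ m * (m + t) := by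
    rcases min_cases (dd G x) (dd G y) with ⟨h1, h2⟩ | ⟨h1, h2⟩
    · have : dd G y ≤ dd G x + t := by
        simpa [dd, ht, dist_comm] using Metric.infDist_le_infDist_add_dist (x := y) (y := x) (s := frontier G)
      rw [hm, h1]
      nlinarith
    · have : dd G x ≤ dd G y + t := by
        simpa [dd, ht] using Metric.infDist_le_infDist_add_dist (x := x) (y := y) (s := frontier G)
      rw [hm, h1]
      nlinarith
  have hm2 : m * m ≤ dd G x * dd G y := by
    rcases min_cases (dd G x) (dd G y) with ⟨h1, h2⟩ | ⟨h1, h2⟩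
    · rw [hm, h1]; nlinarith
    · rw [hm, h1]; nlinarith
  -- exp of jMet
  have hexpj : Real.exp (jMet G x y) = 1 + t / m := by
    have : (0:ℝ) < 1 + t / m :=
      lt_add_of_pos_of_le one_pos (div_nonneg htnn hmpos.le)
    rw [jMet, Real.exp_log this]
  have hw : (Real.exp (jMet G x y) - 1) / 2 = t / (2 * m) := by
    rw [hexpj, add_sub_cancel_left, div_div, mul_comm m 2]
  -- jStar in closed form
  have hjs : jStar G x y = t / (t + 2 * m) := by
    rw [jStar, jMet, tanh_half_log_aux (t / m) (div_nonneg htnn hmpos.le)]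
    rw [div_add' _ _ _ hmpos.ne', div_div_div_cancel_right₀ hmpos.ne']
  -- the denominators
  set A : ℝ := Real.sqrt (t ^ 2 + 4 * dd G x * dd G y) with hA
  set B : ℝ := Real.sqrt (t ^ 2 + 4 * m ^ 2) with hB
  have hApos : 0 < A := Real.sqrt_pos.mpr (by nlinarith)
  have hBpos : 0 < B := Real.sqrt_pos.mpr (by nlinarith)
  have hAle : A ≤ t + 2 * m := by
    rw [hA]
    rw [show t + 2 * m = Real.sqrt ((t + 2 * m) ^ 2) from (Real.sqrt_sq (by positivity)).symm]
    apply Real.sqrt_le_sqrt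
    nlinarith
  have hBleA : B ≤ A := by
    apply Real.sqrt_le_sqrt
    nlinarith
  -- middle term in closed form
  have hmid : (Real.exp (jMet G x y) - 1) / 2 /
      Real.sqrt (((Real.exp (jMet G x y) - 1) / 2) ^ 2 + 1) = t / B := by
    rw [hw]
    have h1 : (t / (2 * m)) ^ 2 + 1 = (t ^ 2 + 4 * m ^ 2) / (2 * m) ^ 2 := by
      field_simp; ring
    rw [h1, Real.sqrt_div (by nlinarith), Real.sqrt_sq (by positivity)]
    rw [div_div_div_cancel_right₀ (by positivity : (2:ℝ) * m ≠ 0)]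
  refine ⟨?_, ?_, ?_⟩
  · -- jStar ≤ pMet
    rw [hjs, pMet, ← ht, ← hA]
    gcongr
  · -- pMet ≤ middle
    rw [hmid, pMet, ← ht, ← hA]
    gcongr
  · -- middle ≤ √2 * jStar
    rw [hmid, hjs, ← mul_div_assoc]
    rw [div_le_div_iff₀ hBpos (by positivity)]
    have key : t + 2 * m ≤ Real.sqrt 2 * B := by
      have h2 : (0:ℝ) ≤ t + 2 * m := by linarith
      have h3 : (0:ℝ) ≤ 2 * (t ^ 2 + 4 * m ^ 2) := by positivity
      rw [hB, ← Real.sqrt_mul (by norm_num)]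
      rw [Real.le_sqrt h2 h3]
      nlinarith [sq_nonneg (t - 2 * m)]
    calc t * (t + 2 * m) ≤ t * (Real.sqrt 2 * B) := by
          apply mul_le_mul_of_nonneg_left key htnn
      _ = Real.sqrt 2 * t * B := by ring
end

section
/- For a proper subdomain G of ℝⁿ and all x, y ∈ G with p_G(x,y) < 1, s_G(x,y) ≤ p_G(x,y) / (1 − p_G(x,y)). -/
open Metric Set

theorem stmt6 {n : ℕ} (G : Set (EuclideanSpace ℝ (Fin n)))
    (hGo : IsOpen G) (hGc : IsConnected G) (hGne : G ≠ univ)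
    (x y : EuclideanSpace ℝ (Fin n)) (hx : x ∈ G) (hy : y ∈ G)
    (hp : pMet G x y < 1) :
    sMet G x y ≤ pMet G x y / (1 - pMet G x y) := by
  have hp0 : 0 ≤ pMet G x y := div_nonneg dist_nonneg (Real.sqrt_nonneg _)
  have hR : 0 ≤ pMet G x y / (1 - pMet G x y) := div_nonneg hp0 (by linarith)
  apply Real.iSup_le _ hR
  rintro ⟨z, hz⟩
  set t := dist x y with ht
  set a := dd G x with hadef
  set b := dd G y with hbdef
  have ha0 : 0 ≤ a := Metric.infDist_nonneg
  have hb0 : 0 ≤ b := Metric.infDist_nonneg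
  have hac : a ≤ dist x z := Metric.infDist_le_dist_of_mem hz
  have hbe : b ≤ dist z y := by
    rw [dist_comm]
    exact Metric.infDist_le_dist_of_mem hz
  rcases eq_or_lt_of_le (dist_nonneg : (0:ℝ) ≤ t) with h0 | h0
  · rw [show t = 0 from ht.trans h0.symm, zero_div]
    exact hR
  -- t > 0 case
  have hs0 : 0 < Real.sqrt (t ^ 2 + 4 * a * b) := by
    apply Real.sqrt_pos.mpr
    nlinarith
  set s := Real.sqrt (t ^ 2 + 4 * a * b) with hsdef
  have hpe : pMet G x y = t / s := rfl
  have hts : t < s := by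
    rw [hpe, div_lt_one hs0] at hp
    exact hp
  have hsle : s ≤ t + a + b := by
    rw [show t + a + b = Real.sqrt ((t + a + b) ^ 2) from
      (Real.sqrt_sq (by positivity)).symm]
    exact Real.sqrt_le_sqrt (by nlinarith [sq_nonneg (a - b)])
  have hce : s - t ≤ dist x z + dist z y := by linarith
  have h1 : t / (dist x z + dist z y) ≤ t / (s - t) := by
    apply div_le_div_of_nonneg_left (le_of_lt h0) (by linarith) hce
  have h2 : pMet G x y / (1 - pMet G x y) = t / (s - t) := by
    rw [hpe]
    field_simp
  rw [h2]
  exact h1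
end

section
/- For a proper subdomain G of ℝⁿ and all x, y ∈ G, tanh(j_G(x,y)/2) ≤ p_G(x,y) ≤ tanh(j_G(x,y)). -/
open Metric Set

/-!
With `t = |x - y|`, `m = min {d(x), d(y)}` and `M = max {d(x), d(y)}` we have `d(x) d(y) = m M`
and, since `d` is 1-Lipschitz, `m ≤ M ≤ m + t`. As `tanh (log u) = (u² - 1) / (u² + 1)`, the
quantities `tanh (j/2) = t / (t + 2m)` and `tanh j = t (t + 2m) / ((t + m)² + m²)` are rational in
`t` and `m`, and both inequalities reduce to comparing `√(t² + 4mM)` with polynomials in `t, m`,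
using `M ≤ m + t` on one side and `m ≤ M` on the other.
-/

namespace Real

lemma tanh_log {u : ℝ} (hu : 0 < u) : tanh (log u) = (u ^ 2 - 1) / (u ^ 2 + 1) := by
  rw [tanh_eq, exp_neg, exp_log hu]
  field_simp

lemma tanh_half_log_s8 {u : ℝ} (hu : 0 < u) : tanh (log u / 2) = (u - 1) / (u + 1) := by
  rw [← log_sqrt hu.le, tanh_log (sqrt_pos.mpr hu), sq_sqrt hu.le]

end Real

open Real

section

variable {m M t : ℝ}

lemma tanh_half_log_one_add_div (hm : 0 < m) (ht : 0 ≤ t) :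
    tanh (log (1 + t / m) / 2) = t / (t + 2 * m) := by
  rw [tanh_half_log_s8 (by positivity)]
  field_simp
  ring

lemma tanh_log_one_add_div (hm : 0 < m) (ht : 0 ≤ t) :
    tanh (log (1 + t / m)) = t * (t + 2 * m) / ((t + m) ^ 2 + m ^ 2) := by
  rw [tanh_log (by positivity)]
  field_simp
  ring

lemma tanh_half_log_one_add_div_le (hm : 0 < m) (ht : 0 ≤ t) (hmM : m ≤ M) (hMm : M ≤ m + t) :
    tanh (log (1 + t / m) / 2) ≤ t / √(t ^ 2 + 4 * m * M) := by
  rw [tanh_half_log_one_add_div hm ht]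
  have hsqrt : √(t ^ 2 + 4 * m * M) ≤ t + 2 * m := by
    rw [sqrt_le_left (by positivity)]
    nlinarith
  exact div_le_div_of_nonneg_left ht (sqrt_pos.mpr (by nlinarith)) hsqrt

lemma div_sqrt_le_tanh_log_one_add_div (hm : 0 < m) (ht : 0 ≤ t) (hmM : m ≤ M) :
    t / √(t ^ 2 + 4 * m * M) ≤ tanh (log (1 + t / m)) := by
  rw [tanh_log_one_add_div hm ht, div_le_div_iff₀ (sqrt_pos.mpr (by nlinarith)) (by positivity),
    mul_assoc]
  gcongr
  -- `((t + m)² + m²)² ≤ (t + 2m)² (t² + 4m²)` with slack `8 m³ t + 12 m⁴`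
  have hM : 0 ≤ t ^ 2 + 4 * m * M := by nlinarith
  rw [← sqrt_sq (by positivity : 0 ≤ t + 2 * m), ← sqrt_mul (by positivity),
    le_sqrt (by positivity) (by positivity)]
  nlinarith [mul_le_mul_of_nonneg_left hmM (by positivity : 0 ≤ 4 * m * (t + 2 * m) ^ 2),
    pow_pos hm 4, mul_nonneg (pow_pos hm 3).le ht]

end

section

variable {n : ℕ} {G : Set (EuclideanSpace ℝ (Fin n))}

lemma dd_pos (hGo : IsOpen G) (hGne : G ≠ univ) {x : EuclideanSpace ℝ (Fin n)} (hx : x ∈ G) :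
    0 < dd G x := by
  have hfr : (frontier G).Nonempty := nonempty_frontier_iff.mpr ⟨⟨x, hx⟩, hGne⟩
  refine (isClosed_frontier.notMem_iff_infDist_pos hfr).mp ?_
  rw [hGo.frontier_eq]
  exact fun h => h.2 hx

lemma max_dd_le_min_dd_add_dist (x y : EuclideanSpace ℝ (Fin n)) :
    max (dd G x) (dd G y) ≤ min (dd G x) (dd G y) + dist x y := by
  have h := (lipschitz_infDist_pt (frontier G)).dist_le_mul x y
  rw [NNReal.coe_one, one_mul, Real.dist_eq, ← max_sub_min_eq_abs'] at h
  exact sub_le_iff_le_add'.mp h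

end

theorem stmt8_general {n : ℕ} (G : Set (EuclideanSpace ℝ (Fin n)))
    (hGo : IsOpen G) (hGne : G ≠ univ)
    (x y : EuclideanSpace ℝ (Fin n)) (hx : x ∈ G) (hy : y ∈ G) :
    Real.tanh (jMet G x y / 2) ≤ pMet G x y ∧ pMet G x y ≤ Real.tanh (jMet G x y) := by
  have hm : 0 < min (dd G x) (dd G y) := lt_min (dd_pos hGo hGne hx) (dd_pos hGo hGne hy)
  rw [pMet, mul_assoc 4, ← min_mul_max (dd G x), ← mul_assoc, jMet]
  exact ⟨tanh_half_log_one_add_div_le hm dist_nonneg min_le_max (max_dd_le_min_dd_add_dist x y),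
    div_sqrt_le_tanh_log_one_add_div hm dist_nonneg min_le_max⟩

theorem stmt8 {n : ℕ} (G : Set (EuclideanSpace ℝ (Fin n)))
    (hGo : IsOpen G) (hGc : IsConnected G) (hGne : G ≠ univ)
    (x y : EuclideanSpace ℝ (Fin n)) (hx : x ∈ G) (hy : y ∈ G) :
    Real.tanh (jMet G x y / 2) ≤ pMet G x y ∧ pMet G x y ≤ Real.tanh (jMet G x y) :=
  stmt8_general G hGo hGne x y hx hy
end

section
/- If G ⊂ ℝⁿ is any domain, then for all x, y ∈ G, s_G(x,y) ≥ sin(v_G(x,y)/2). -/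
open Metric Set

theorem stmt14 {n : ℕ} (G : Set (EuclideanSpace ℝ (Fin n)))
    (hGo : IsOpen G) (hGc : IsConnected G) (hGne : G ≠ univ)
    (x y : EuclideanSpace ℝ (Fin n)) (hx : x ∈ G) (hy : y ∈ G) :
    sMet G x y ≥ Real.sin (vMet G x y / 2) := by
  classical
  -- frontier is nonempty
  have hne : (frontier G).Nonempty := by
    rw [nonempty_frontier_iff]
    exact ⟨⟨x, hx⟩, hGne⟩
  haveI : Nonempty (frontier G) := hne.to_subtype
  -- boundedness of the two suprema
  have hbddf : BddAbove (Set.range fun z : frontier G =>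
      dist x y / (dist x (z : EuclideanSpace ℝ (Fin n)) + dist (z : EuclideanSpace ℝ (Fin n)) y)) := by
    refine ⟨1, ?_⟩
    rintro _ ⟨z, rfl⟩
    exact div_le_one_of_le₀ (dist_triangle _ _ _) (by positivity)
  have hbddv : BddAbove (Set.range fun z : frontier G =>
      EuclideanGeometry.angle x (z : EuclideanSpace ℝ (Fin n)) y) := by
    refine ⟨Real.pi, ?_⟩
    rintro _ ⟨z, rfl⟩
    exact EuclideanGeometry.angle_le_pi _ _ _
  -- key pointwise bound
  have key : ∀ z : frontier G,
      Real.sin (EuclideanGeometry.angle x (z : EuclideanSpace ℝ (Fin n)) y / 2) ≤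
      dist x y / (dist x (z : EuclideanSpace ℝ (Fin n)) + dist (z : EuclideanSpace ℝ (Fin n)) y) := by
    rintro ⟨z, hz⟩
    set θ := EuclideanGeometry.angle x z y with hθ
    have hθ0 : 0 ≤ θ := EuclideanGeometry.angle_nonneg _ _ _
    have hθpi : θ ≤ Real.pi := EuclideanGeometry.angle_le_pi _ _ _
    set a := dist x z
    set b := dist z y
    set c := dist x y
    have hzx : z ≠ x := by
      intro h
      have : x ∉ interior G := by
        rw [frontier] at hz
        exact fun hxi => hz.2 (h ▸ hxi)
      exact this (by rwa [hGo.interior_eq])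
    have ha : 0 < a := dist_pos.mpr (fun h => hzx h.symm)
    have hb : 0 ≤ b := dist_nonneg
    have hs0 : 0 ≤ Real.sin (θ / 2) :=
      Real.sin_nonneg_of_nonneg_of_le_pi (by linarith) (by linarith [Real.pi_pos])
    have hs1 : Real.sin (θ / 2) ^ 2 ≤ 1 := by
      nlinarith [Real.neg_one_le_sin (θ / 2), Real.sin_le_one (θ / 2)]
    -- law of cosines
    have hlaw : c ^ 2 = a ^ 2 + b ^ 2 - 2 * a * b * Real.cos θ := by
      have h := EuclideanGeometry.law_cos x z y
      rw [dist_comm y z] at h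
      simp only [pow_two]
      exact h
    have hcos : Real.cos θ = 1 - 2 * Real.sin (θ / 2) ^ 2 := by
      have h1 := Real.sin_sq (θ / 2)
      have h2 := Real.cos_sq (θ / 2)
      have h3 : 2 * (θ / 2) = θ := by ring
      rw [h3] at h2
      linarith
    have hsq : ((a + b) * Real.sin (θ / 2)) ^ 2 ≤ c ^ 2 := by
      rw [hlaw, hcos]
      nlinarith [sq_nonneg (a - b), sq_nonneg (Real.sin (θ / 2))]
    have hab : 0 < a + b := by linarith
    have hstep : (a + b) * Real.sin (θ / 2) ≤ c := by
      have h1 : 0 ≤ (a + b) * Real.sin (θ / 2) := mul_nonneg hab.le hs0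
      have h2 : 0 ≤ c := dist_nonneg
      nlinarith
    rw [le_div_iff₀ hab]
    linarith [hstep]
  -- bounds on vMet
  have hv0 : 0 ≤ vMet G x y := by
    obtain ⟨z⟩ := (inferInstance : Nonempty (frontier G))
    exact le_trans (EuclideanGeometry.angle_nonneg x z y) (le_ciSup hbddv z)
  have hvpi : vMet G x y ≤ Real.pi := ciSup_le fun z => EuclideanGeometry.angle_le_pi _ _ _
  -- main argument: for every ε > 0
  rw [ge_iff_le]
  refine le_of_forall_pos_le_add fun ε hε => ?_
  obtain ⟨z, hzv⟩ := exists_lt_of_lt_ciSup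
    (show vMet G x y - ε < vMet G x y by linarith)
  set θ := EuclideanGeometry.angle x (z : EuclideanSpace ℝ (Fin n)) y with hθdef
  have hθ0 : 0 ≤ θ := EuclideanGeometry.angle_nonneg _ _ _
  have hθv : θ ≤ vMet G x y := le_ciSup hbddv z
  -- Lipschitz-type bound: sin(v/2) - sin(θ/2) ≤ (v - θ)/2 ≤ ε/2
  have hlip : Real.sin (vMet G x y / 2) - Real.sin (θ / 2) ≤ (vMet G x y - θ) / 2 := by
    rw [Real.sin_sub_sin]
    have harg : (vMet G x y / 2 - θ / 2) / 2 = (vMet G x y - θ) / 4 := by ring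
    have h0 : 0 ≤ (vMet G x y - θ) / 4 := by linarith
    have hsle : Real.sin ((vMet G x y / 2 - θ / 2) / 2) ≤ (vMet G x y - θ) / 4 := by
      rw [harg]
      exact Real.sin_le h0
    have hsnn : 0 ≤ Real.sin ((vMet G x y / 2 - θ / 2) / 2) := by
      rw [harg]
      apply Real.sin_nonneg_of_nonneg_of_le_pi h0
      nlinarith [Real.pi_pos]
    have hc1 : Real.cos ((vMet G x y / 2 + θ / 2) / 2) ≤ 1 := Real.cos_le_one _
    have hc2 : -1 ≤ Real.cos ((vMet G x y / 2 + θ / 2) / 2) := Real.neg_one_le_cos _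
    nlinarith
  have hfz : Real.sin (θ / 2) ≤ dist x y /
      (dist x (z : EuclideanSpace ℝ (Fin n)) + dist (z : EuclideanSpace ℝ (Fin n)) y) := key z
  have hsup : dist x y /
      (dist x (z : EuclideanSpace ℝ (Fin n)) + dist (z : EuclideanSpace ℝ (Fin n)) y) ≤
      sMet G x y := le_ciSup hbddf z
  have : vMet G x y - θ ≤ ε := by linarith
  linarith
end

section
/- Let f : G → fG ⊂ ℝⁿ be a sense-preserving homeomorphism that is L-bilipschitz with respect to the triangular ratio metric: s_G(x,y)/L ≤ s_{fG}(f(x),f(y)) ≤ L·s_G(x,y) for all x, y ∈ G. Then f is quasiconformal and its linear dilatation satisfies H(f) ≤ L². -/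
open Metric Set Filter

/-- linear dilatation of f at z -/
noncomputable def linDil {n : ℕ} (f : EuclideanSpace ℝ (Fin n) → EuclideanSpace ℝ (Fin n))
    (z : EuclideanSpace ℝ (Fin n)) : ℝ :=
  Filter.limsup (fun r : ℝ =>
      (⨆ x : Metric.sphere z r, dist (f (x : EuclideanSpace ℝ (Fin n))) (f z)) /
      (⨅ y : Metric.sphere z r, dist (f (y : EuclideanSpace ℝ (Fin n))) (f z)))
    (nhdsWithin (0:ℝ) (Set.Ioi 0))

private lemma sMet_bdd {n : ℕ} (G : Set (EuclideanSpace ℝ (Fin n))) (x y : EuclideanSpace ℝ (Fin n)) :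
    BddAbove (Set.range fun ζ : frontier G =>
      dist x y / (dist x (ζ : EuclideanSpace ℝ (Fin n)) + dist (ζ : EuclideanSpace ℝ (Fin n)) y)) := by
  refine ⟨1, ?_⟩
  rintro _ ⟨ζ, rfl⟩
  exact div_le_one_of_le₀ (dist_triangle x ζ y) (by positivity)

private lemma le_sMet {n : ℕ} {G : Set (EuclideanSpace ℝ (Fin n))} {ζ : EuclideanSpace ℝ (Fin n)}
    (hζ : ζ ∈ frontier G) (x y : EuclideanSpace ℝ (Fin n)) :
    dist x y / (dist x ζ + dist ζ y) ≤ sMet G x y :=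
  le_ciSup_of_le (sMet_bdd G x y) ⟨ζ, hζ⟩ le_rfl

private lemma algebra_id (L d D r : ℝ) (hL : 0 < L) (hd : 0 < d) (hD : 0 < D) (hr : 0 < r)
    (h1 : L * r < 2 * d - r) :
    (2*D*(L*r/(2*d-r))/(1-L*r/(2*d-r))) / (2*D*(r/(L*(r+2*d)))/(1+r/(L*(r+2*d))))
      = L^2*((2*d+r)*(1+r/(L*(r+2*d))))/((2*d-r)*(1-L*r/(2*d-r))) := by
  have h2 : (0:ℝ) < 2*d - r := lt_of_le_of_lt (by nlinarith) h1
  have h4 : (0:ℝ) < L*(r+2*d) := mul_pos hL (by linarith)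
  have h3 : (2:ℝ)*d - r - L*r ≠ 0 := by nlinarith
  have h5 : L*(r+2*d) + r ≠ 0 := by nlinarith
  field_simp
  ring

set_option maxHeartbeats 2000000 in
theorem stmt17 {n : ℕ} (G G' : Set (EuclideanSpace ℝ (Fin n)))
    (hGo : IsOpen G) (hGc : IsConnected G) (hGne : G ≠ univ)
    (hG'o : IsOpen G') (hG'ne : G' ≠ univ)
    (f : EuclideanSpace ℝ (Fin n) → EuclideanSpace ℝ (Fin n))
    (hf : Set.BijOn f G G') (hfc : ContinuousOn f G)
    (L : ℝ) (hL : 1 ≤ L)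
    (hbl : ∀ x ∈ G, ∀ y ∈ G,
      sMet G x y / L ≤ sMet G' (f x) (f y) ∧ sMet G' (f x) (f y) ≤ L * sMet G x y) :
    ∀ z ∈ G, linDil f z ≤ L ^ 2 := by
  intro z hz
  have hL0 : (0:ℝ) < L := lt_of_lt_of_le one_pos hL
  rcases Nat.eq_zero_or_pos n with hn | hn
  · subst hn
    exact absurd (Set.eq_univ_of_forall fun w => (Subsingleton.elim w z) ▸ hz) hGne
  haveI : Nonempty (Fin n) := ⟨⟨0, hn⟩⟩
  haveI : Nontrivial (EuclideanSpace ℝ (Fin n)) := inferInstance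
  -- constants
  have hz' : f z ∈ G' := hf.mapsTo hz
  set d := Metric.infDist z Gᶜ with hd_def
  set D := Metric.infDist (f z) G'ᶜ with hD_def
  have hd : 0 < d := by
    rw [hd_def, ← hGo.isClosed_compl.notMem_iff_infDist_pos (nonempty_compl.2 hGne)]
    simpa using hz
  have hD : 0 < D := by
    rw [hD_def, ← hG'o.isClosed_compl.notMem_iff_infDist_pos (nonempty_compl.2 hG'ne)]
    simpa using hz'
  obtain ⟨ζ₀, hζ₀f, hζ₀d⟩ := exists_mem_frontier_infDist_compl_eq_dist hz hGne
  obtain ⟨ζ', hζ'f, hζ'd⟩ := exists_mem_frontier_infDist_compl_eq_dist hz' hG'ne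
  have hfrG : ∀ ζ ∈ frontier G, ζ ∈ Gᶜ := fun ζ h => (hGo.frontier_eq ▸ h).2
  have hfrG' : ∀ ζ ∈ frontier G', ζ ∈ G'ᶜ := fun ζ h => (hG'o.frontier_eq ▸ h).2
  have hball : ∀ w : EuclideanSpace ℝ (Fin n), dist w z < d → w ∈ G := by
    intro w hw
    by_contra hwG
    have := Metric.infDist_le_dist_of_mem (x := z) (show w ∈ Gᶜ from hwG)
    rw [dist_comm] at this
    exact absurd (lt_of_le_of_lt (hd_def ▸ this) hw) (lt_irrefl _)
  set g : ℝ → ℝ := fun r => L^2*((2*d+r)*(1+r/(L*(r+2*d))))/((2*d-r)*(1-L*r/(2*d-r))) with hg_def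
  -- tendsto of g
  have hgc : ContinuousAt g 0 := by
    apply ContinuousAt.div
    · exact continuousAt_const.mul ((continuousAt_const.add continuousAt_id).mul
        (continuousAt_const.add (continuousAt_id.div (by fun_prop)
          (show L*((0:ℝ)+2*d) ≠ 0 from (mul_pos hL0 (by linarith)).ne'))))
    · exact (continuousAt_const.sub continuousAt_id).mul
        (continuousAt_const.sub ((continuousAt_const.mul continuousAt_id).div (by fun_prop)
          (show (2:ℝ)*d - 0 ≠ 0 from by simp; linarith)))
    · show ((2*d-0)*(1-L*0/(2*d-0))) ≠ 0
      have : (0:ℝ) < 2*d := by linarith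
      simp [this.ne']
  have hg0 : g 0 = L^2 := by
    have h2d : (2*d) ≠ 0 := ne_of_gt (by linarith)
    simp only [hg_def]
    norm_num
    field_simp
  have hgt : Tendsto g (nhdsWithin (0:ℝ) (Set.Ioi 0)) (nhds (L^2)) :=
    hg0 ▸ (hgc.tendsto.mono_left nhdsWithin_le_nhds)
  -- the per-radius estimate
  set Φ : ℝ → ℝ := fun r =>
      (⨆ x : Metric.sphere z r, dist (f (x : EuclideanSpace ℝ (Fin n))) (f z)) /
      (⨅ y : Metric.sphere z r, dist (f (y : EuclideanSpace ℝ (Fin n))) (f z)) with hΦ_def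
  have hΦ0 : ∀ r : ℝ, 0 ≤ Φ r := fun r =>
    div_nonneg (Real.iSup_nonneg fun _ => dist_nonneg) (Real.iInf_nonneg fun _ => dist_nonneg)
  have hev : ∀ᶠ r in nhdsWithin (0:ℝ) (Set.Ioi 0), Φ r ≤ g r := by
    filter_upwards [Ioo_mem_nhdsGT_of_mem (show (0:ℝ) ∈ Set.Ico 0 (d/(L+1)) from
      ⟨le_rfl, div_pos hd (by linarith)⟩)] with r hr
    obtain ⟨hr0, hrr⟩ := hr
    have hrd : r * (L+1) < d := (lt_div_iff₀ (by linarith)).1 hrr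
    have hσlt : L*r < 2*d - r := by nlinarith
    have h2dr : (0:ℝ) < 2*d - r := lt_of_le_of_lt (by nlinarith) hσlt
    set σ := L*r/(2*d-r) with hσ_def
    set τ := r/(L*(r+2*d)) with hτ_def
    have hσ0 : 0 < σ := div_pos (mul_pos hL0 hr0) h2dr
    have hσ1 : σ < 1 := (div_lt_one h2dr).2 hσlt
    have hτ0 : 0 < τ := div_pos hr0 (mul_pos hL0 (by linarith))
    have hsub : ∀ w : EuclideanSpace ℝ (Fin n), w ∈ Metric.sphere z r → w ∈ G := by
      intro w hw
      refine hball w ?_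
      rw [mem_sphere] at hw
      rw [hw]
      nlinarith
    -- sup bound
    have hS : (⨆ x : Metric.sphere z r, dist (f (x : EuclideanSpace ℝ (Fin n))) (f z))
        ≤ 2*D*σ/(1-σ) := by
      refine Real.iSup_le (fun x => ?_) (div_pos (by nlinarith [mul_pos hD hσ0]) (by linarith)).le
      have hxG : (x : EuclideanSpace ℝ (Fin n)) ∈ G := hsub x x.2
      have hxz : dist (x : EuclideanSpace ℝ (Fin n)) z = r := mem_sphere.mp x.2
      set e := dist (f (x : EuclideanSpace ℝ (Fin n))) (f z) with he_def
      have he0 : 0 ≤ e := dist_nonneg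
      have h1 : sMet G x z ≤ r/(2*d-r) := by
        refine Real.iSup_le (fun ζ => ?_) (div_nonneg hr0.le h2dr.le)
        have h2 : d ≤ dist (ζ : EuclideanSpace ℝ (Fin n)) z := by
          rw [dist_comm, hd_def]; exact Metric.infDist_le_dist_of_mem (hfrG ζ ζ.2)
        have h3 := dist_triangle (ζ : EuclideanSpace ℝ (Fin n)) (x : EuclideanSpace ℝ (Fin n)) z
        rw [dist_comm (ζ : EuclideanSpace ℝ (Fin n)) (x : EuclideanSpace ℝ (Fin n))] at h3
        rw [hxz]
        exact div_le_div_of_nonneg_left hr0.le h2dr (by linarith)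
      have hs' : sMet G' (f x) (f z) ≤ σ := by
        refine le_trans (hbl x hxG z hz).2 ?_
        rw [hσ_def, mul_div_assoc]
        exact mul_le_mul_of_nonneg_left h1 hL0.le
      have hζ'D : dist ζ' (f z) = D := by rw [dist_comm]; exact hζ'd.symm
      have hden : 0 < dist (f (x : EuclideanSpace ℝ (Fin n))) ζ' + dist ζ' (f z) := by
        have := dist_nonneg (x := f (x : EuclideanSpace ℝ (Fin n))) (y := ζ')
        rw [hζ'D]; linarith
      have hlow : e/(e+2*D) ≤ sMet G' (f x) (f z) := by
        refine le_trans ?_ (le_sMet hζ'f _ _)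
        have h4 := dist_triangle (f (x : EuclideanSpace ℝ (Fin n))) (f z) ζ'
        rw [dist_comm (f z) ζ', hζ'D] at h4
        exact div_le_div_of_nonneg_left he0 hden (by rw [hζ'D]; linarith)
      have h5 : e/(e+2*D) ≤ σ := hlow.trans hs'
      have h6 : e ≤ σ*(e+2*D) := (div_le_iff₀ (by linarith)).1 h5
      rw [le_div_iff₀ (by linarith : (0:ℝ) < 1-σ)]
      nlinarith
    -- inf bound
    haveI hne : Nonempty (Metric.sphere z r) := (NormedSpace.sphere_nonempty.mpr hr0.le).to_subtype
    have hb0 : 0 < 2*D*τ/(1+τ) := div_pos (by nlinarith [mul_pos hD hτ0]) (by linarith)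
    have hI : 2*D*τ/(1+τ)
        ≤ ⨅ y : Metric.sphere z r, dist (f (y : EuclideanSpace ℝ (Fin n))) (f z) := by
      refine le_ciInf fun y => ?_
      have hyG : (y : EuclideanSpace ℝ (Fin n)) ∈ G := hsub y y.2
      have hyz : dist (y : EuclideanSpace ℝ (Fin n)) z = r := mem_sphere.mp y.2
      set e := dist (f (y : EuclideanSpace ℝ (Fin n))) (f z) with he_def
      have he0 : 0 ≤ e := dist_nonneg
      have hζ₀D : dist ζ₀ z = d := by rw [dist_comm]; exact hζ₀d.symm
      have h1 : r/(r+2*d) ≤ sMet G y z := by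
        refine le_trans ?_ (le_sMet hζ₀f _ _)
        have h4 := dist_triangle (y : EuclideanSpace ℝ (Fin n)) z ζ₀
        rw [dist_comm z ζ₀, hζ₀D] at h4
        rw [hyz]
        refine div_le_div_of_nonneg_left hr0.le ?_ (by rw [hζ₀D]; linarith)
        have := dist_nonneg (x := (y : EuclideanSpace ℝ (Fin n))) (y := ζ₀)
        rw [hζ₀D]; linarith
      have h2 : τ ≤ sMet G' (f y) (f z) := by
        refine le_trans ?_ (hbl y hyG z hz).1
        have : τ = (r/(r+2*d))/L := by rw [hτ_def, div_div, mul_comm]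
        rw [this]
        exact div_le_div_of_nonneg_right h1 hL0.le
      by_cases hcase : e < 2*D
      · have h3 : sMet G' (f y) (f z) ≤ e/(2*D-e) := by
          refine Real.iSup_le (fun ζ => ?_) (div_nonneg he0 (by linarith))
          have h5 : D ≤ dist (ζ : EuclideanSpace ℝ (Fin n)) (f z) := by
            rw [dist_comm, hD_def]; exact Metric.infDist_le_dist_of_mem (hfrG' ζ ζ.2)
          have h6 := dist_triangle (ζ : EuclideanSpace ℝ (Fin n)) (f (y : EuclideanSpace ℝ (Fin n))) (f z)
          rw [dist_comm (ζ : EuclideanSpace ℝ (Fin n)) (f (y : EuclideanSpace ℝ (Fin n)))] at h6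
          exact div_le_div_of_nonneg_left he0 (by linarith) (by linarith)
        have h7 : τ*(2*D-e) ≤ e := (le_div_iff₀ (by linarith : (0:ℝ) < 2*D-e)).1 (h2.trans h3)
        rw [div_le_iff₀ (by linarith : (0:ℝ) < 1+τ)]
        nlinarith
      · push_neg at hcase
        have : 2*D*τ/(1+τ) ≤ 2*D := by
          rw [div_le_iff₀ (by linarith)]
          nlinarith
        linarith
    have hΦr : Φ r ≤ (2*D*σ/(1-σ)) / (2*D*τ/(1+τ)) :=
      div_le_div₀ (div_pos (by nlinarith [mul_pos hD hσ0]) (by linarith)).le hS hb0 hI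
    refine hΦr.trans (le_of_eq ?_)
    rw [hσ_def, hτ_def, hg_def]
    exact algebra_id L d D r hL0 hd hD hr0 hσlt
  -- conclude
  show limsup Φ (nhdsWithin (0:ℝ) (Set.Ioi 0)) ≤ L^2
  calc limsup Φ (nhdsWithin (0:ℝ) (Set.Ioi 0))
      ≤ limsup g (nhdsWithin (0:ℝ) (Set.Ioi 0)) :=
        limsup_le_limsup hev
          (isCoboundedUnder_le_of_eventually_le _ (Eventually.of_forall hΦ0))
          hgt.isBoundedUnder_le
    _ = L^2 := hgt.limsup_eq
end
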